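/- Let (Ω, 𝔄) be a measurable space, σ a finite positive semidefinite q×q matrix measure on it, and f ∈ L¹(σ) a complex-valued measurable function. Then the column space of ∫_Ω f dσ is contained in the column space of σ(Ω), and the null space of σ(Ω) is contained in the null space of ∫_Ω f dσ. -/

import Mathlib

/-!
If `σ(Ω) x = 0`, then `∫ x* dσ x = 0` with a pointwise nonnegative integrand, so the density
annihilates `x` almost everywhere and hence `(∫ f dσ) x = 0`. The conjugate transpose of
`∫ f dσ` is `∫ conj f dσ`, so the same argument gives `ker σ(Ω) ≤ ker (∫ f dσ)*`, and taking
orthogonal complements turns this into the inclusion of column spaces.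
-/

open Matrix Complex MeasureTheory Filter
open scoped ComplexOrder

/-- The "imaginary part" of a complex square matrix: `Im M = (M - M*)/(2i)`. -/
noncomputable def mIm {q : ℕ} (M : Matrix (Fin q) (Fin q) ℂ) : Matrix (Fin q) (Fin q) ℂ :=
  ((2 : ℂ) * Complex.I)⁻¹ • (M - Mᴴ)

/-- The "real part" of a complex square matrix: `Re M = (M + M*)/2`. -/
noncomputable def mRe {q : ℕ} (M : Matrix (Fin q) (Fin q) ℂ) : Matrix (Fin q) (Fin q) ℂ :=
  ((2 : ℂ))⁻¹ • (M + Mᴴ)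

open scoped ComplexConjugate

namespace Matrix

variable {𝕜 : Type*} [RCLike 𝕜] {m n : Type*}

theorem range_mulVecLin_le_of_ker_conjTranspose_le [Fintype m] [Fintype n] {A B : Matrix m n 𝕜}
    (h : LinearMap.ker Bᴴ.mulVecLin ≤ LinearMap.ker Aᴴ.mulVecLin) :
    LinearMap.range A.mulVecLin ≤ LinearMap.range B.mulVecLin := by
  classical
  have hE : LinearMap.range (toEuclideanLin A) ≤ LinearMap.range (toEuclideanLin B) := by
    rw [← Submodule.orthogonal_orthogonal (LinearMap.range (toEuclideanLin A)),
      ← Submodule.orthogonal_orthogonal (LinearMap.range (toEuclideanLin B)),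
      LinearMap.orthogonal_range, LinearMap.orthogonal_range,
      ← toEuclideanLin_conjTranspose_eq_adjoint, ← toEuclideanLin_conjTranspose_eq_adjoint]
    exact Submodule.orthogonal_le fun v hv =>
      congrArg (WithLp.toLp 2) (h (show Bᴴ *ᵥ v.ofLp = 0 from congrArg WithLp.ofLp hv))
  rintro _ ⟨x, rfl⟩
  obtain ⟨w, hw⟩ := hE ⟨WithLp.toLp 2 x, rfl⟩
  exact ⟨w.ofLp, congrArg WithLp.ofLp hw⟩

section Integral

variable {Ω : Type*} [MeasurableSpace Ω] {μ : Measure Ω}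

theorem integrable_mulVec_apply [Fintype n] {A : Ω → Matrix m n 𝕜}
    (hA : ∀ i j, Integrable (fun ω => A ω i j) μ) (x : n → 𝕜) (i : m) :
    Integrable (fun ω => (A ω *ᵥ x) i) μ :=
  integrable_finsetSum _ fun j _ => (hA i j).mul_const _

theorem integral_mulVec [Fintype n] {A : Ω → Matrix m n 𝕜}
    (hA : ∀ i j, Integrable (fun ω => A ω i j) μ) (x : n → 𝕜) :
    (of fun i j => ∫ ω, A ω i j ∂μ) *ᵥ x = fun i => ∫ ω, (A ω *ᵥ x) i ∂μ := by
  funext i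
  simp only [mulVec, dotProduct, of_apply]
  rw [integral_finsetSum _ fun j _ => (hA i j).mul_const _]
  simp_rw [integral_mul_const]

theorem conjTranspose_integral (A : Ω → Matrix m n 𝕜) :
    (of fun i j => ∫ ω, A ω i j ∂μ)ᴴ = of fun i j => ∫ ω, (A ω)ᴴ i j ∂μ := by
  ext i j
  simp [integral_conj]

theorem dotProduct_integral_mulVec [Fintype n] {A : Ω → Matrix n n 𝕜}
    (hA : ∀ i j, Integrable (fun ω => A ω i j) μ) (x : n → 𝕜) :
    star x ⬝ᵥ (of fun i j => ∫ ω, A ω i j ∂μ) *ᵥ x = ∫ ω, star x ⬝ᵥ A ω *ᵥ x ∂μ := by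
  simp only [integral_mulVec hA, dotProduct]
  rw [integral_finsetSum _ fun i _ => (integrable_mulVec_apply hA x i).const_mul _]
  simp_rw [integral_const_mul]

theorem ae_mulVec_eq_zero_of_integral_mulVec_eq_zero [Fintype n] {A : Ω → Matrix n n 𝕜}
    (hpsd : ∀ ω, (A ω).PosSemidef) (hA : ∀ i j, Integrable (fun ω => A ω i j) μ) {x : n → 𝕜}
    (hx : (of fun i j => ∫ ω, A ω i j ∂μ) *ᵥ x = 0) :
    ∀ᵐ ω ∂μ, A ω *ᵥ x = 0 := by
  have hnonneg : ∀ ω, 0 ≤ star x ⬝ᵥ A ω *ᵥ x := fun ω => (hpsd ω).dotProduct_mulVec_nonneg x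
  have hint : Integrable (fun ω => star x ⬝ᵥ A ω *ᵥ x) μ :=
    integrable_finsetSum _ fun i _ => (integrable_mulVec_apply hA x i).const_mul _
  have hre : (fun ω => RCLike.re (star x ⬝ᵥ A ω *ᵥ x)) =ᵐ[μ] 0 := by
    refine (integral_eq_zero_iff_of_nonneg (fun ω => (RCLike.nonneg_iff.mp (hnonneg ω)).1)
      hint.re).mp ?_
    rw [integral_re hint, ← dotProduct_integral_mulVec hA, hx, dotProduct_zero, map_zero]
  filter_upwards [hre] with ω hω
  refine ((hpsd ω).dotProduct_mulVec_zero_iff x).mp (RCLike.ext ?_ ?_)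
  · simpa using hω
  · simpa using (RCLike.nonneg_iff.mp (hnonneg ω)).2

theorem ker_integral_le_ker_integral_mul [Fintype n] {A : Ω → Matrix n n 𝕜}
    (hpsd : ∀ ω, (A ω).PosSemidef) (hA : ∀ i j, Integrable (fun ω => A ω i j) μ) {f : Ω → 𝕜}
    (hf : ∀ i j, Integrable (fun ω => f ω * A ω i j) μ) :
    LinearMap.ker (of fun i j => ∫ ω, A ω i j ∂μ).mulVecLin ≤
      LinearMap.ker (of fun i j => ∫ ω, f ω * A ω i j ∂μ).mulVecLin := by
  intro x hx
  have hfA : (of fun i j => ∫ ω, f ω * A ω i j ∂μ) *ᵥ x =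
      fun i => ∫ ω, f ω * (A ω *ᵥ x) i ∂μ := by
    have h := integral_mulVec (μ := μ) (A := fun ω => f ω • A ω) (by simpa using hf) x
    simpa only [smul_apply, smul_eq_mul, smul_mulVec, Pi.smul_apply] using h
  have hAx := ae_mulVec_eq_zero_of_integral_mulVec_eq_zero hpsd hA hx
  rw [LinearMap.mem_ker, mulVecLin_apply, hfA]
  funext i
  refine integral_eq_zero_of_ae ?_
  filter_upwards [hAx] with ω hω
  simp [hω]

theorem isHermitian_integral {A : Ω → Matrix n n 𝕜} (hA : ∀ ω, (A ω).IsHermitian) :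
    (of fun i j => ∫ ω, A ω i j ∂μ).IsHermitian := by
  simp only [IsHermitian, conjTranspose_integral, (hA _).eq]

theorem conjTranspose_integral_mul_of_isHermitian {A : Ω → Matrix n n 𝕜}
    (hA : ∀ ω, (A ω).IsHermitian) (f : Ω → 𝕜) :
    (of fun i j => ∫ ω, f ω * A ω i j ∂μ)ᴴ = of fun i j => ∫ ω, conj (f ω) * A ω i j ∂μ := by
  ext i j
  simp [← integral_conj, ← (hA _).apply i j]

end Integral

end Matrix

theorem stmt6_general {q : ℕ} {Ω : Type*} [MeasurableSpace Ω]
    (τ : Measure Ω)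
    (d : Ω → Matrix (Fin q) (Fin q) ℂ)
    (hdpsd : ∀ ω, (d ω).PosSemidef)
    (hdint : ∀ j k, Integrable (fun ω => d ω j k) τ)
    (f : Ω → ℂ)
    (hfint : ∀ j k, Integrable (fun ω => f ω * d ω j k) τ) :
    LinearMap.range (Matrix.of fun j k => ∫ ω, f ω * d ω j k ∂τ).mulVecLin ≤
      LinearMap.range (Matrix.of fun j k => ∫ ω, d ω j k ∂τ : Matrix (Fin q) (Fin q) ℂ).mulVecLin
    ∧ LinearMap.ker (Matrix.of fun j k => ∫ ω, d ω j k ∂τ : Matrix (Fin q) (Fin q) ℂ).mulVecLin ≤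
      LinearMap.ker (Matrix.of fun j k => ∫ ω, f ω * d ω j k ∂τ).mulVecLin := by
  have hdherm ω : (d ω).IsHermitian := (hdpsd ω).isHermitian
  have hconjint j k : Integrable (fun ω => conj (f ω) * d ω j k) τ := by
    simpa [← (hdherm _).apply k j] using RCLike.conjLIE.integrable_comp_iff.mpr (hfint k j)
  refine ⟨range_mulVecLin_le_of_ker_conjTranspose_le ?_,
    ker_integral_le_ker_integral_mul hdpsd hdint hfint⟩
  rw [(isHermitian_integral hdherm).eq, conjTranspose_integral_mul_of_isHermitian hdherm]
  exact ker_integral_le_ker_integral_mul hdpsd hdint hconjint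

theorem stmt6 {q : ℕ} {Ω : Type*} [MeasurableSpace Ω]
    (τ : Measure Ω) [IsFiniteMeasure τ]
    (d : Ω → Matrix (Fin q) (Fin q) ℂ)
    (hdmeas : ∀ j k : Fin q, Measurable fun ω => d ω j k)
    (hdpsd : ∀ ω, (d ω).PosSemidef)
    (hdint : ∀ j k, Integrable (fun ω => d ω j k) τ)
    (f : Ω → ℂ) (hfmeas : Measurable f)
    (hfint : ∀ j k, Integrable (fun ω => f ω * d ω j k) τ) :
    LinearMap.range (Matrix.of fun j k => ∫ ω, f ω * d ω j k ∂τ).mulVecLin ≤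
      LinearMap.range (Matrix.of fun j k => ∫ ω, d ω j k ∂τ : Matrix (Fin q) (Fin q) ℂ).mulVecLin
    ∧ LinearMap.ker (Matrix.of fun j k => ∫ ω, d ω j k ∂τ : Matrix (Fin q) (Fin q) ℂ).mulVecLin ≤
      LinearMap.ker (Matrix.of fun j k => ∫ ω, f ω * d ω j k ∂τ).mulVecLin :=
  stmt6_general τ d hdpsd hdint f hfint
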